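/- Let σ be a nonempty finite CNN request sequence whose last request is r = r(x,y), let W = W_σ be its work function, and fix λ ∈ (0,1) and α with 0 < α < (1−λ)/(2(1+λ)). If F_W (respectively G_W) attains its infimum over M³ at (s_1,s_2,s_3), then s_1, s_2, s_3 ∈ r. -/

import Mathlib

/-!
The work function `W` of `σ r` is 1-Lipschitz for the L1 metric, and every point `s` has an
anchor `t ∈ r` with `W t + d(t, s) ≤ W s`: `W s` is the infimum of `W_σ t + d(t, s)` over
`t ∈ r`, and this coercive continuous function attains its minimum on the closed set `r`.

Replace `s₁` by its anchor `t`, at distance `D`. Then `H` drops by at least `(1 - λ) D / 2`,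
while the slack of `s₃` drops by at most `(1 + λ) D`, because every point of the new pair or box
lies within `D` of a point of the old one. Replacing `s₃` by its anchor instead lowers the
objective by `α (1 - λ) D`. The bound on `α` makes either move a strict improvement unless
`D = 0`, so `s₁` and `s₃` of a minimizer already lie on `r`, and `s₂` does by symmetry.
-/

noncomputable section

/-- The L1 metric on `ℝ²` (the CNN metric space). -/
def dL1 (p q : ℝ × ℝ) : ℝ := |p.1 - q.1| + |p.2 - q.2|

/-- The CNN request associated with a point `(x, y)`. -/
def req (p : ℝ × ℝ) : Set (ℝ × ℝ) := {q | q.1 = p.1 ∨ q.2 = p.2}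

/-- The work function of a finite CNN request sequence (requests listed in order of arrival),
starting at origin `O`. -/
noncomputable def WF (O : ℝ × ℝ) : List (ℝ × ℝ) → (ℝ × ℝ) → ℝ
  | [], s => dL1 O s
  | p :: l, s => sInf ((fun t => dL1 O t + WF t l s) '' req p)

/-- The slack of a point `s` to a nonempty set `C` with respect to `W`. -/
noncomputable def Sl (lam : ℝ) (W : ℝ × ℝ → ℝ) (s : ℝ × ℝ) (C : Set (ℝ × ℝ)) : ℝ :=
  sInf ((fun t => W t + lam * dL1 t s) '' C) - W s

/-- The rectangle spanned by two points of `ℝ²`. -/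
def Boks (s1 s2 : ℝ × ℝ) : Set (ℝ × ℝ) :=
  {p | p.1 ∈ Set.uIcc s1.1 s2.1 ∧ p.2 ∈ Set.uIcc s1.2 s2.2}

/-- `H_W(s₁,s₂) = (1/2)W(s₁) + (1/2)W(s₂) − (λ/2)d(s₁,s₂)`. -/
noncomputable def Hf (lam : ℝ) (W : ℝ × ℝ → ℝ) (s1 s2 : ℝ × ℝ) : ℝ :=
  (1 / 2) * W s1 + (1 / 2) * W s2 - (lam / 2) * dL1 s1 s2

/-- `F_W(s₁,s₂,s₃) = H_W(s₁,s₂) − α·Sl_W(s₃;{s₁,s₂})`. -/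
noncomputable def Ff (lam α : ℝ) (W : ℝ × ℝ → ℝ) (s1 s2 s3 : ℝ × ℝ) : ℝ :=
  Hf lam W s1 s2 - α * Sl lam W s3 {s1, s2}

/-- `G_W(s₁,s₂,s₃) = H_W(s₁,s₂) − α·Sl_W(s₃;Boks(s₁,s₂))`. -/
noncomputable def Gf (lam α : ℝ) (W : ℝ × ℝ → ℝ) (s1 s2 s3 : ℝ × ℝ) : ℝ :=
  Hf lam W s1 s2 - α * Sl lam W s3 (Boks s1 s2)

open Set Filter Topology

lemma dL1_nonneg (a b : ℝ × ℝ) : 0 ≤ dL1 a b := by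
  unfold dL1; positivity

lemma dL1_self (a : ℝ × ℝ) : dL1 a a = 0 := by
  simp [dL1]

lemma dL1_comm (a b : ℝ × ℝ) : dL1 a b = dL1 b a := by
  unfold dL1; rw [abs_sub_comm a.1, abs_sub_comm a.2]

lemma dL1_triangle (a b c : ℝ × ℝ) : dL1 a c ≤ dL1 a b + dL1 b c := by
  unfold dL1; linarith [abs_sub_le a.1 b.1 c.1, abs_sub_le a.2 b.2 c.2]

lemma eq_of_dL1_eq_zero {a b : ℝ × ℝ} (h : dL1 a b = 0) : a = b := by
  rw [dL1, add_eq_zero_iff_of_nonneg (abs_nonneg _) (abs_nonneg _), abs_eq_zero, abs_eq_zero,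
    sub_eq_zero, sub_eq_zero] at h
  exact Prod.ext h.1 h.2

lemma dist_le_dL1 (a b : ℝ × ℝ) : dist a b ≤ dL1 a b := by
  rw [Prod.dist_eq, Real.dist_eq, Real.dist_eq, dL1]
  exact max_le (le_add_of_nonneg_right (abs_nonneg _)) (le_add_of_nonneg_left (abs_nonneg _))

lemma dL1_le_two_mul_dist (a b : ℝ × ℝ) : dL1 a b ≤ 2 * dist a b := by
  rw [Prod.dist_eq, Real.dist_eq, Real.dist_eq, dL1]
  linarith [le_max_left |a.1 - b.1| |a.2 - b.2|, le_max_right |a.1 - b.1| |a.2 - b.2|]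

lemma continuous_dL1_left (s : ℝ × ℝ) : Continuous fun t => dL1 t s := by
  unfold dL1; fun_prop

lemma req_self (p : ℝ × ℝ) : p ∈ req p := Or.inl rfl

lemma req_nonempty (p : ℝ × ℝ) : (req p).Nonempty := ⟨p, req_self p⟩

lemma isClosed_req (p : ℝ × ℝ) : IsClosed (req p) :=
  (isClosed_eq continuous_fst continuous_const).union (isClosed_eq continuous_snd continuous_const)

lemma bddBelow_image_of_nonneg {α : Type*} {f : α → ℝ} (hf : ∀ x, 0 ≤ f x) (S : Set α) :
    BddBelow (f '' S) :=
  ⟨0, by rintro _ ⟨x, -, rfl⟩; exact hf x⟩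

lemma csInf_image_le_csInf_image_add {α : Type*} {S S' : Set α} {f g : α → ℝ} {c : ℝ}
    (hS' : S'.Nonempty) (hf : BddBelow (f '' S)) (h : ∀ u ∈ S', ∃ v ∈ S, f v ≤ g u + c) :
    sInf (f '' S) ≤ sInf (g '' S') + c := by
  rw [← sub_le_iff_le_add]
  refine le_csInf (hS'.image g) ?_
  rintro _ ⟨u, hu, rfl⟩
  obtain ⟨v, hv, hvu⟩ := h u hu
  linarith [csInf_le hf (mem_image_of_mem f hv)]

section WorkFunction

variable (O : ℝ × ℝ) (l : List (ℝ × ℝ))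

lemma WF_nonneg (s : ℝ × ℝ) : 0 ≤ WF O l s := by
  induction l generalizing O with
  | nil => exact dL1_nonneg O s
  | cons q l ih =>
    exact Real.sInf_nonneg (by rintro _ ⟨t, -, rfl⟩; exact add_nonneg (dL1_nonneg O t) (ih t))

lemma bddBelow_WF_cons_image (s : ℝ × ℝ) (S : Set (ℝ × ℝ)) :
    BddBelow ((fun t => dL1 O t + WF t l s) '' S) :=
  bddBelow_image_of_nonneg (fun t => add_nonneg (dL1_nonneg O t) (WF_nonneg t l s)) S

lemma WF_cons_le {q u : ℝ × ℝ} (hu : u ∈ req q) (s : ℝ × ℝ) :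
    WF O (q :: l) s ≤ dL1 O u + WF u l s :=
  csInf_le (bddBelow_WF_cons_image O l s _) ⟨u, hu, rfl⟩

lemma WF_le_add (s s' : ℝ × ℝ) : WF O l s ≤ WF O l s' + dL1 s' s := by
  induction l generalizing O with
  | nil => exact dL1_triangle O s' s
  | cons q l ih =>
    exact csInf_image_le_csInf_image_add (req_nonempty q) (bddBelow_WF_cons_image O l s _)
      fun u hu => ⟨u, hu, by linarith [ih u]⟩

lemma WF_append_le {p t : ℝ × ℝ} (ht : t ∈ req p) (s : ℝ × ℝ) :
    WF O (l ++ [p]) s ≤ WF O l t + dL1 t s := by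
  induction l generalizing O with
  | nil => exact WF_cons_le O [] ht s
  | cons q l ih =>
    rw [List.cons_append, WF, WF]
    exact csInf_image_le_csInf_image_add (req_nonempty q) (bddBelow_WF_cons_image O _ s _)
      fun u hu => ⟨u, hu, by linarith [ih u]⟩

lemma csInf_le_WF_append (p s : ℝ × ℝ) :
    sInf ((fun t => WF O l t + dL1 t s) '' req p) ≤ WF O (l ++ [p]) s := by
  induction l generalizing O with
  | nil => rfl
  | cons q l ih =>
    rw [List.cons_append, WF]
    refine le_csInf ((req_nonempty q).image _) ?_
    rintro _ ⟨u, hu, rfl⟩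
    have hbdd := bddBelow_image_of_nonneg
      (fun t => add_nonneg (WF_nonneg O (q :: l) t) (dL1_nonneg t s)) (req p)
    calc sInf ((fun t => WF O (q :: l) t + dL1 t s) '' req p)
        ≤ sInf ((fun t => WF u l t + dL1 t s) '' req p) + dL1 O u :=
          csInf_image_le_csInf_image_add (req_nonempty p) hbdd
            fun t ht => ⟨t, ht, by linarith [WF_cons_le O l hu t]⟩
      _ ≤ dL1 O u + WF u (l ++ [p]) s := by linarith [ih u]

lemma continuous_WF : Continuous (WF O l) := by
  refine (LipschitzWith.of_dist_le_mul (K := 2) fun a b => ?_).continuous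
  rw [Real.dist_eq, abs_sub_le_iff]
  have hab := dL1_le_two_mul_dist a b
  have hba := dL1_le_two_mul_dist b a
  rw [dist_comm] at hba
  push_cast
  constructor <;> linarith [WF_le_add O l a b, WF_le_add O l b a]

lemma exists_mem_req_WF_append_add_le (p s : ℝ × ℝ) :
    ∃ t ∈ req p, WF O (l ++ [p]) t + dL1 t s ≤ WF O (l ++ [p]) s := by
  set g : ℝ × ℝ → ℝ := fun t => WF O l t + dL1 t s with hg
  have hcoercive : ∀ᶠ t in cocompact (ℝ × ℝ) ⊓ 𝓟 (req p), g p ≤ g t :=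
    Eventually.filter_mono inf_le_left <|
      ((tendsto_dist_right_cocompact_atTop s).eventually_ge_atTop (g p)).mono fun t ht => by
        simp only [hg]; linarith [dist_le_dL1 t s, WF_nonneg O l t]
  obtain ⟨t, ht, hmin⟩ := ((continuous_WF O l).add (continuous_dL1_left s)).continuousOn
    |>.exists_isMinOn' (isClosed_req p) (req_self p) hcoercive
  have hgt : g t ≤ WF O (l ++ [p]) s :=
    (le_csInf ((req_nonempty p).image g) (by rintro _ ⟨u, hu, rfl⟩; exact hmin hu)).trans
      (csInf_le_WF_append O l p s)
  have hWt : WF O (l ++ [p]) t ≤ WF O l t := by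
    simpa [dL1_self] using WF_append_le O l ht t
  exact ⟨t, ht, by simp only [hg] at hgt; linarith⟩

end WorkFunction

section Slack

variable {lam : ℝ} {W : ℝ × ℝ → ℝ}

lemma bddBelow_image_add_mul_dL1 (hlam : 0 ≤ lam) (hW : BddBelow (range W)) (s : ℝ × ℝ)
    (C : Set (ℝ × ℝ)) : BddBelow ((fun t => W t + lam * dL1 t s) '' C) := by
  obtain ⟨m, hm⟩ := hW
  refine ⟨m, ?_⟩
  rintro _ ⟨t, -, rfl⟩
  linarith [hm (mem_range_self t), mul_nonneg hlam (dL1_nonneg t s)]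

lemma Sl_le_Sl_add_of_forall_exists_dL1_le (hlam : 0 ≤ lam) (hW : BddBelow (range W))
    (hLip : ∀ s s', W s ≤ W s' + dL1 s' s) {C C' : Set (ℝ × ℝ)} (hC' : C'.Nonempty) {D : ℝ}
    (hnear : ∀ q ∈ C', ∃ q' ∈ C, dL1 q q' ≤ D) (s : ℝ × ℝ) :
    Sl lam W s C ≤ Sl lam W s C' + (1 + lam) * D := by
  suffices sInf ((fun t => W t + lam * dL1 t s) '' C) ≤
      sInf ((fun t => W t + lam * dL1 t s) '' C') + (1 + lam) * D by unfold Sl; linarith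
  refine csInf_image_le_csInf_image_add hC' (bddBelow_image_add_mul_dL1 hlam hW s C)
    fun q hq => ?_
  obtain ⟨q', hq', hqq'⟩ := hnear q hq
  have htri : dL1 q' s ≤ dL1 q q' + dL1 q s := by
    rw [dL1_comm q q']; exact dL1_triangle q' q s
  refine ⟨q', hq', ?_⟩
  linarith [hLip q' q, mul_le_mul_of_nonneg_left htri hlam, mul_le_mul_of_nonneg_left hqq' hlam]

lemma Sl_add_le_Sl_add (hlam : 0 ≤ lam) (hW : BddBelow (range W)) {C : Set (ℝ × ℝ)}
    (hC : C.Nonempty) (s s' : ℝ × ℝ) :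
    Sl lam W s C + W s ≤ Sl lam W s' C + W s' + lam * dL1 s' s := by
  simp only [Sl, sub_add_cancel]
  refine csInf_image_le_csInf_image_add hC (bddBelow_image_add_mul_dL1 hlam hW s C)
    fun q hq => ⟨q, hq, ?_⟩
  linarith [mul_le_mul_of_nonneg_left (dL1_triangle q s' s) hlam]

/-- `F_W` and `G_W` are the cases `C = {·, ·}` and `C = Boks`. -/
def slackObjective (lam α : ℝ) (W : ℝ × ℝ → ℝ) (C : ℝ × ℝ → ℝ × ℝ → Set (ℝ × ℝ))
    (s1 s2 s3 : ℝ × ℝ) : ℝ :=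
  Hf lam W s1 s2 - α * Sl lam W s3 (C s1 s2)

variable {α : ℝ} {C : ℝ × ℝ → ℝ × ℝ → Set (ℝ × ℝ)}

lemma eq_of_slackObjective_le_of_replace_first (hlam : 0 ≤ lam) (hα : 0 ≤ α)
    (hc : 0 < (1 - lam) / 2 - α * (1 + lam)) (hW : BddBelow (range W))
    (hLip : ∀ s s', W s ≤ W s' + dL1 s' s) (hCne : ∀ a b, (C a b).Nonempty)
    (hCnear : ∀ a a' b, ∀ q ∈ C a' b, ∃ q' ∈ C a b, dL1 q q' ≤ dL1 a' a)
    {s1 s2 s3 t : ℝ × ℝ}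
    (hle : slackObjective lam α W C s1 s2 s3 ≤ slackObjective lam α W C t s2 s3)
    (ht : W t + dL1 t s1 ≤ W s1) : t = s1 := by
  have htri : dL1 s1 s2 ≤ dL1 t s1 + dL1 t s2 := by
    rw [dL1_comm t s1]; exact dL1_triangle s1 t s2
  have hH : Hf lam W t s2 ≤ Hf lam W s1 s2 - (1 - lam) / 2 * dL1 t s1 := by
    unfold Hf; linarith [mul_le_mul_of_nonneg_left htri hlam]
  have hSl := Sl_le_Sl_add_of_forall_exists_dL1_le hlam hW hLip (hCne t s2) (hCnear s1 t s2) s3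
  have hD : ((1 - lam) / 2 - α * (1 + lam)) * dL1 t s1 ≤ 0 := by
    unfold slackObjective at hle; linarith [mul_le_mul_of_nonneg_left hSl hα]
  exact eq_of_dL1_eq_zero (le_antisymm (nonpos_of_mul_nonpos_right hD hc) (dL1_nonneg t s1))

lemma eq_of_slackObjective_le_of_replace_third (hlam : 0 ≤ lam) (hlam1 : lam < 1) (hα : 0 < α)
    (hW : BddBelow (range W)) (hCne : ∀ a b, (C a b).Nonempty) {s1 s2 s3 t : ℝ × ℝ}
    (hle : slackObjective lam α W C s1 s2 s3 ≤ slackObjective lam α W C s1 s2 t)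
    (ht : W t + dL1 t s3 ≤ W s3) : t = s3 := by
  have hSl := Sl_add_le_Sl_add hlam hW (hCne s1 s2) s3 t
  have hD : (α * (1 - lam)) * dL1 t s3 ≤ 0 := by
    unfold slackObjective at hle; linarith [mul_le_mul_of_nonneg_left hSl hα.le, mul_le_mul_of_nonneg_left ht hα.le]
  exact eq_of_dL1_eq_zero (le_antisymm
    (nonpos_of_mul_nonpos_right hD (mul_pos hα (sub_pos.2 hlam1))) (dL1_nonneg t s3))

theorem forall_mem_of_isMin_slackObjective (hlam : 0 ≤ lam) (hlam1 : lam < 1) (hα : 0 < α)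
    (hα1 : α < (1 - lam) / (2 * (1 + lam))) (hW : BddBelow (range W))
    (hLip : ∀ s s', W s ≤ W s' + dL1 s' s) {R : Set (ℝ × ℝ)}
    (hR : ∀ s, ∃ t ∈ R, W t + dL1 t s ≤ W s) (hCne : ∀ a b, (C a b).Nonempty)
    (hCcomm : ∀ a b, C a b = C b a)
    (hCnear : ∀ a a' b, ∀ q ∈ C a' b, ∃ q' ∈ C a b, dL1 q q' ≤ dL1 a' a) {s1 s2 s3 : ℝ × ℝ}
    (hmin : ∀ t1 t2 t3, slackObjective lam α W C s1 s2 s3 ≤ slackObjective lam α W C t1 t2 t3) :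
    s1 ∈ R ∧ s2 ∈ R ∧ s3 ∈ R := by
  have hc : 0 < (1 - lam) / 2 - α * (1 + lam) := by
    rw [lt_div_iff₀ (by positivity)] at hα1; linarith
  have hswap : ∀ a b c, slackObjective lam α W C a b c = slackObjective lam α W C b a c := by
    intro a b c; unfold slackObjective Hf; rw [hCcomm, dL1_comm]; ring
  have hfirst : ∀ {a b c}, (∀ t1 t2 t3, slackObjective lam α W C a b c ≤
      slackObjective lam α W C t1 t2 t3) → a ∈ R := fun hm => by
    obtain ⟨t, ht, hWt⟩ := hR _
    rwa [← eq_of_slackObjective_le_of_replace_first hlam hα.le hc hW hLip hCne hCnear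
      (hm t _ _) hWt]
  obtain ⟨t3, ht3, hWt3⟩ := hR s3
  refine ⟨hfirst hmin, hfirst fun t1 t2 t3 => hswap s2 s1 s3 ▸ hmin t1 t2 t3, ?_⟩
  rwa [← eq_of_slackObjective_le_of_replace_third hlam hlam1 hα hW hCne (hmin s1 s2 t3) hWt3]

end Slack

lemma exists_mem_pair_dL1_le (a a' b : ℝ × ℝ) :
    ∀ q ∈ ({a', b} : Set (ℝ × ℝ)), ∃ q' ∈ ({a, b} : Set (ℝ × ℝ)), dL1 q q' ≤ dL1 a' a := by
  rintro q (rfl | rfl)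
  · exact ⟨a, mem_insert a _, le_rfl⟩
  · exact ⟨q, mem_insert_of_mem a rfl, by rw [dL1_self]; exact dL1_nonneg a' a⟩

lemma exists_mem_uIcc_abs_sub_le {a a' b x : ℝ} (hx : x ∈ uIcc a' b) :
    ∃ y ∈ uIcc a b, |x - y| ≤ |a' - a| := by
  rcases uIcc_subset_uIcc_union_uIcc (b := a) hx with hx | hx
  · exact ⟨a, left_mem_uIcc, abs_sub_left_of_mem_uIcc (uIcc_comm a' a ▸ hx)⟩
  · exact ⟨x, hx, by simp⟩

lemma Boks_nonempty (a b : ℝ × ℝ) : (Boks a b).Nonempty :=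
  ⟨a, left_mem_uIcc, left_mem_uIcc⟩

lemma Boks_comm (a b : ℝ × ℝ) : Boks a b = Boks b a := by
  simp only [Boks, uIcc_comm a.1, uIcc_comm a.2]

lemma exists_mem_Boks_dL1_le (a a' b : ℝ × ℝ) :
    ∀ q ∈ Boks a' b, ∃ q' ∈ Boks a b, dL1 q q' ≤ dL1 a' a := by
  rintro q ⟨hq1, hq2⟩
  obtain ⟨y1, hy1, h1⟩ := exists_mem_uIcc_abs_sub_le (a := a.1) hq1
  obtain ⟨y2, hy2, h2⟩ := exists_mem_uIcc_abs_sub_le (a := a.2) hq2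
  exact ⟨(y1, y2), ⟨hy1, hy2⟩, add_le_add h1 h2⟩

/-- If `F_W` (resp. `G_W`) attains its infimum over `M³` at `(s₁,s₂,s₃)`, where `W` is the
work function of a nonempty request sequence with last request `r(p)`, then all three points
lie on that last request. -/
theorem minimizer_serves_last_request (lam α : ℝ) (h0 : 0 < lam) (h1 : lam < 1)
    (hα0 : 0 < α) (hα1 : α < (1 - lam) / (2 * (1 + lam)))
    (O : ℝ × ℝ) (l : List (ℝ × ℝ)) (p : ℝ × ℝ) (s1 s2 s3 : ℝ × ℝ)
    (hmin :
      (∀ t1 t2 t3 : ℝ × ℝ,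
        Ff lam α (WF O (l ++ [p])) s1 s2 s3 ≤ Ff lam α (WF O (l ++ [p])) t1 t2 t3) ∨
      (∀ t1 t2 t3 : ℝ × ℝ,
        Gf lam α (WF O (l ++ [p])) s1 s2 s3 ≤ Gf lam α (WF O (l ++ [p])) t1 t2 t3)) :
    s1 ∈ req p ∧ s2 ∈ req p ∧ s3 ∈ req p := by
  have hW : BddBelow (range (WF O (l ++ [p]))) :=
    ⟨0, by rintro _ ⟨s, rfl⟩; exact WF_nonneg O _ s⟩
  have hLip := WF_le_add O (l ++ [p])
  have hR := exists_mem_req_WF_append_add_le O l p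
  rcases hmin with hm | hm
  · exact forall_mem_of_isMin_slackObjective (C := fun a b => {a, b}) h0.le h1 hα0 hα1 hW hLip
      hR (fun a b => insert_nonempty a {b}) pair_comm exists_mem_pair_dL1_le hm
  · exact forall_mem_of_isMin_slackObjective (C := Boks) h0.le h1 hα0 hα1 hW hLip hR
      Boks_nonempty Boks_comm exists_mem_Boks_dL1_le hm
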